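/- Let T be a 4-dimensional complex vector space, and for X ∈ Λ²T define on the Klein quadric {X : X∧X = 0} the endomorphism-valued expression: if Q is a function on Λ²T homogeneous of degree 2 and F^α_β = 2X^{αγ}∂_{βγ} are the gl(T)-generators, then γ^α_β = (1/(2Q))·F^α_β Q satisfies γ² = γ and tr(γ) = 2 at every point where Q ≠ 0 and X∧X = 0. -/

import Mathlib

/-!
Let `L = dQ_X` and let `c` be its coordinate matrix, `L Y = ∑ Y_{ab} c_{ab}`. Since `Q` only sees
the skew part of its argument, `c` is skew, and then `F^α_β Q = 2 (X cᵀ)^α_β`; Euler's identity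
gives `tr (X cᵀ) = L X = 2 Q`. For skew `4 × 4` matrices `X`, `C` one has
`X C X = ½ tr (X C) X + Pf(X) ⋆C`, so on the Klein quadric `Pf(X) = 0` the matrix `M = X cᵀ`
satisfies `M² = ½ tr M · M = Q M`, and `γ = M / Q` is a projection of trace `2`.
-/

open Finset

/-- The value of the `gl(T)`-generator vector field `F^α_β = 2X^{αγ}∂_{βγ}` on the
coordinates of `Λ²T`: `(F^α_β)·dX^{γδ} = δ^γ_β X^{αδ} − δ^δ_β X^{αγ}`. -/
noncomputable def Fdir (X : Fin 4 → Fin 4 → ℂ) (α β : Fin 4) :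
    Fin 4 → Fin 4 → ℂ :=
  fun γ δ => (if γ = β then X α δ else 0) - (if δ = β then X α γ else 0)

/-- `γ^α_β = (1/(2Q))·F^α_β Q`. -/
noncomputable def gammaQ (Q : (Fin 4 → Fin 4 → ℂ) → ℂ)
    (X : Fin 4 → Fin 4 → ℂ) (α β : Fin 4) : ℂ :=
  fderiv ℂ Q X (Fdir X α β) / (2 * Q X)

open Matrix

theorem fderiv_apply_self_of_homogeneous {𝕜 E F : Type*} [NontriviallyNormedField 𝕜]
    [NormedAddCommGroup E] [NormedSpace 𝕜 E] [NormedAddCommGroup F] [NormedSpace 𝕜 F]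
    {f : E → F} {x : E} (hf : DifferentiableAt 𝕜 f x) (k : ℕ)
    (hhom : ∀ t : 𝕜, f (t • x) = t ^ k • f x) :
    fderiv 𝕜 f x x = (k : 𝕜) • f x := by
  have hline : HasDerivAt (fun t : 𝕜 => t • x) x 1 := by
    simpa using (hasDerivAt_id (1 : 𝕜)).smul_const x
  have hcomp : HasDerivAt (fun t : 𝕜 => f (t • x)) (fderiv 𝕜 f x x) 1 := by
    rw [← one_smul 𝕜 x] at hf
    simpa only [one_smul, Function.comp_def] using hf.hasFDerivAt.comp_hasDerivAt 1 hline
  have hpow : HasDerivAt (fun t : 𝕜 => t ^ k • f x) ((k : 𝕜) • f x) 1 := by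
    simpa using (hasDerivAt_pow k (1 : 𝕜)).smul_const (f x)
  rw [funext hhom] at hcomp
  exact hcomp.unique hpow

theorem fderiv_comp_eq_of_comp_eq {𝕜 E F : Type*} [NontriviallyNormedField 𝕜]
    [NormedAddCommGroup E] [NormedSpace 𝕜 E] [NormedAddCommGroup F] [NormedSpace 𝕜 F]
    {f : E → F} {x : E} {P : E →L[𝕜] E} (hf : DifferentiableAt 𝕜 f x)
    (hfP : f ∘ P = f) (hPx : P x = x) :
    (fderiv 𝕜 f x).comp P = fderiv 𝕜 f x := by
  rw [← hPx] at hf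
  have h := hf.hasFDerivAt.comp x P.hasFDerivAt
  rw [hfP, hPx] at h
  exact h.fderiv.symm

section SkewPart

variable {n 𝕜 : Type*} [Fintype n] [NontriviallyNormedField 𝕜] [CompleteSpace 𝕜]

noncomputable def skewPart : (n → n → 𝕜) →L[𝕜] (n → n → 𝕜) :=
  LinearMap.toContinuousLinearMap
    { toFun := fun Y a b => (Y a b - Y b a) / 2
      map_add' := fun Y Z => by ext a b; simp only [Pi.add_apply]; ring
      map_smul' := fun t Y => by
        ext a b
        simp only [Pi.smul_apply, smul_eq_mul, RingHom.id_apply]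
        ring }

theorem skewPart_apply (Y : n → n → 𝕜) (a b : n) : skewPart Y a b = (Y a b - Y b a) / 2 := rfl

theorem skewPart_transpose (Y : n → n → 𝕜) :
    skewPart (fun a b => Y b a) = -skewPart Y := by
  ext a b
  simp only [skewPart_apply, Pi.neg_apply]
  ring

theorem skewPart_eq_self [CharZero 𝕜] {X : n → n → 𝕜} (hX : ∀ a b, X b a = -X a b) :
    skewPart X = X := by
  ext a b
  rw [skewPart_apply, hX]
  ring

theorem fderiv_apply_transpose_of_comp_skewPart [CharZero 𝕜] {F : Type*} [NormedAddCommGroup F]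
    [NormedSpace 𝕜 F] {f : (n → n → 𝕜) → F} {X : n → n → 𝕜}
    (hf : DifferentiableAt 𝕜 f X) (hfP : f ∘ skewPart = f) (hX : ∀ a b, X b a = -X a b)
    (Y : n → n → 𝕜) :
    fderiv 𝕜 f X (fun a b => Y b a) = -fderiv 𝕜 f X Y := by
  rw [← fderiv_comp_eq_of_comp_eq hf hfP (skewPart_eq_self hX)]
  simp only [ContinuousLinearMap.comp_apply, skewPart_transpose, map_neg]

end SkewPart

section Coordinates

variable {n R F : Type*} [DecidableEq n] [CommRing R] [FunLike F (n → n → R) R]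

def coordMatrix (L : F) : Matrix n n R := Matrix.of fun a b => L (Pi.single a (Pi.single b 1))

theorem apply_eq_sum_coordMatrix [Fintype n] [LinearMapClass F R (n → n → R) R] (L : F)
    (Y : n → n → R) :
    L Y = ∑ a, ∑ b, Y a b * coordMatrix L a b := by
  have hY : Y = ∑ a, ∑ b, Y a b • Pi.single a (Pi.single b (1 : R)) := by
    ext a b
    simp [Finset.sum_apply, Pi.single_apply, ite_apply]
  conv_lhs => rw [hY]
  simp only [map_sum, map_smul, smul_eq_mul, coordMatrix, of_apply]

theorem coordMatrix_transpose (L : F) (hL : ∀ Y, L (fun a b => Y b a) = -L Y) :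
    (coordMatrix L)ᵀ = -coordMatrix L := by
  ext a b
  simp only [transpose_apply, Matrix.neg_apply, coordMatrix, of_apply]
  rw [← hL]
  congr 1
  funext i j
  simp only [Pi.single_apply]
  split_ifs <;> simp_all

end Coordinates

section Pfaffian

variable {K : Type*} [Field K] [CharZero K]

def pfaffian4 (X : Matrix (Fin 4) (Fin 4) K) : K :=
  X 0 1 * X 2 3 - X 0 2 * X 1 3 + X 0 3 * X 1 2

def hodgeStar4 (C : Matrix (Fin 4) (Fin 4) K) : Matrix (Fin 4) (Fin 4) K :=
  !![0, C 2 3, -C 1 3, C 1 2;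
    -C 2 3, 0, C 0 3, -C 0 2;
    C 1 3, -C 0 3, 0, C 0 1;
    -C 1 2, C 0 2, -C 0 1, 0]

theorem eq_skew4_of_transpose_eq_neg {X : Matrix (Fin 4) (Fin 4) K} (hX : Xᵀ = -X) :
    X = !![0, X 0 1, X 0 2, X 0 3;
      -X 0 1, 0, X 1 2, X 1 3;
      -X 0 2, -X 1 2, 0, X 2 3;
      -X 0 3, -X 1 3, -X 2 3, 0] := by
  have h : ∀ i j, X j i = -X i j := fun i j => congrFun (congrFun hX i) j
  have hdiag : ∀ i, X i i = 0 := fun i => CharZero.eq_neg_self_iff.mp (h i i)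
  ext i j
  fin_cases i <;> fin_cases j <;> simp [hdiag] <;> exact h _ _

theorem mul_mul_eq_of_transpose_eq_neg {X C : Matrix (Fin 4) (Fin 4) K}
    (hX : Xᵀ = -X) (hC : Cᵀ = -C) :
    X * C * X = (trace (X * C) / 2) • X + pfaffian4 X • hodgeStar4 C := by
  rw [eq_skew4_of_transpose_eq_neg hX, eq_skew4_of_transpose_eq_neg hC]
  ext i j
  fin_cases i <;> fin_cases j <;>
    simp [pfaffian4, hodgeStar4, Matrix.mul_apply, Fin.sum_univ_four, Matrix.trace] <;> ring

theorem mul_mul_self_eq_of_pfaffian4_eq_zero {X C : Matrix (Fin 4) (Fin 4) K}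
    (hX : Xᵀ = -X) (hC : Cᵀ = -C) (hpf : pfaffian4 X = 0) :
    X * C * (X * C) = (trace (X * C) / 2) • (X * C) := by
  rw [← Matrix.mul_assoc, mul_mul_eq_of_transpose_eq_neg hX hC, hpf, zero_smul, add_zero,
    smul_mul_assoc]

end Pfaffian

theorem isIdempotentElem_smul_and_trace_eq_two {n K : Type*} [Fintype n] [DecidableEq n]
    [Field K] [CharZero K] {M : Matrix n n K} (hM : M * M = (trace M / 2) • M)
    (htr : trace M ≠ 0) :
    IsIdempotentElem ((trace M / 2)⁻¹ • M) ∧ trace ((trace M / 2)⁻¹ • M) = 2 := by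
  constructor
  · rw [IsIdempotentElem, smul_mul_smul_comm, hM, smul_smul]
    congr 1
    field_simp
  · rw [trace_smul, smul_eq_mul]
    field_simp

theorem apply_Fdir {F : Type*} [FunLike F (Fin 4 → Fin 4 → ℂ) ℂ]
    [LinearMapClass F ℂ (Fin 4 → Fin 4 → ℂ) ℂ] (L : F)
    (hL : ∀ Y, L (fun a b => Y b a) = -L Y) (X : Fin 4 → Fin 4 → ℂ) (α β : Fin 4) :
    L (Fdir X α β) = 2 * (of X * (coordMatrix L)ᵀ) α β := by
  set Y : Fin 4 → Fin 4 → ℂ := fun γ δ => if γ = β then X α δ else 0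
  have hFdir : Fdir X α β = Y - fun γ δ => Y δ γ := rfl
  rw [hFdir, map_sub, hL Y, sub_neg_eq_add, ← two_mul, apply_eq_sum_coordMatrix]
  simp [Y, Matrix.mul_apply]

theorem stmt6 (Q : (Fin 4 → Fin 4 → ℂ) → ℂ)
    (hQdiff : Differentiable ℂ Q)
    (hQhom : ∀ (t : ℂ) (Y : Fin 4 → Fin 4 → ℂ), Q (t • Y) = t ^ 2 * Q Y)
    (hQskew : ∀ Y : Fin 4 → Fin 4 → ℂ,
      Q Y = Q (fun a b => (Y a b - Y b a) / 2))
    (X : Fin 4 → Fin 4 → ℂ) (hskew : ∀ a b, X b a = -X a b)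
    (hquad : X 0 1 * X 2 3 + X 0 2 * X 3 1 + X 0 3 * X 1 2 = 0)
    (hQX : Q X ≠ 0) :
    (∀ α β, ∑ ρ, gammaQ Q X α ρ * gammaQ Q X ρ β = gammaQ Q X α β) ∧
      ∑ α, gammaQ Q X α α = 2 := by
  set L := fderiv ℂ Q X
  have hL : ∀ Y, L (fun a b => Y b a) = -L Y :=
    fderiv_apply_transpose_of_comp_skewPart (hQdiff X) (funext fun Y => (hQskew Y).symm) hskew
  set M := of X * (coordMatrix L)ᵀ
  have hM : M * M = (trace M / 2) • M := by
    refine mul_mul_self_eq_of_pfaffian4_eq_zero (by ext a b; exact hskew a b)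
      (by simp [coordMatrix_transpose L hL]) ?_
    simp only [pfaffian4, of_apply]
    linear_combination hquad - X 0 2 * hskew 1 3
  have htrace : trace M = 2 * Q X := by
    have hEuler := fderiv_apply_self_of_homogeneous (hQdiff X) 2 fun t => by
      rw [hQhom, smul_eq_mul]
    rw [apply_eq_sum_coordMatrix] at hEuler
    simpa [M, trace, Matrix.mul_apply] using hEuler
  have hγ : of (gammaQ Q X) = (trace M / 2)⁻¹ • M := by
    ext α β
    rw [of_apply, gammaQ, apply_Fdir L hL, htrace, Matrix.smul_apply, smul_eq_mul,
      mul_div_cancel_left₀ _ two_ne_zero, mul_div_mul_left _ _ two_ne_zero, div_eq_inv_mul]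
  obtain ⟨hidem, htr⟩ := isIdempotentElem_smul_and_trace_eq_two hM (by simp [htrace, hQX])
  rw [← hγ] at hidem htr
  exact ⟨fun α β => congrFun (congrFun hidem α) β, htr⟩
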